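/- arXiv:2409.02801 — 4 statements merged into one kernel-verified Lean document; each statement's English description precedes it below -/
import Mathlib

section
/- If two '+−' Motzkin paths (viewed as intervals of positions in a word) intersect, then one is properly contained in the interior of the other; in particular neither endpoint of the larger is contained in the smaller. -/
/-- The three-letter alphabet `{+, −, ±}` of signatures. -/
inductive Letter
  | plus
  | minus
  | pm
  deriving DecidableEq

/-- Value of a letter: `v(+) = 1`, `v(−) = −1`, `v(±) = 0`. -/
def Letter.val : Letter → ℤ
  | .plus => 1
  | .minus => -1
  | .pm => 0

/-- The sum of values of a word. -/
def wordVal (w : List Letter) : ℤ := (w.map Letter.val).sum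

/-- The contiguous subword of `w` on the interval of positions `[a, b)`. -/
def seg (w : List Letter) (a b : ℕ) : List Letter := (w.take b).drop a

/-- The interval `[a, b)` of positions in `w` carries a '+−' Motzkin path: it is a
nonempty contiguous subword beginning with `+`, ending with `−`, with total value `0`,
all of whose proper initial segments have strictly positive value sum. -/
def IsMotzkinAt (w : List Letter) (a b : ℕ) : Prop :=
  a < b ∧ b ≤ w.length ∧
    (seg w a b).head? = some Letter.plus ∧
    (seg w a b).getLast? = some Letter.minus ∧
    wordVal (seg w a b) = 0 ∧
    ∀ c, a < c → c < b → 0 < wordVal (seg w a c)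

/-- Prefix sum of values. -/
def prefP (w : List Letter) (c : ℕ) : ℤ := wordVal (w.take c)

lemma segP (w : List Letter) {a c : ℕ} (h : a ≤ c) :
    wordVal (seg w a c) = prefP w c - prefP w a := by
  have h1 : (w.take c).take a ++ (w.take c).drop a = w.take c :=
    List.take_append_drop _ _
  have h2 : (w.take c).take a = w.take a := by
    rw [List.take_take, Nat.min_eq_left h]
  have h3 : w.take c = w.take a ++ seg w a c := by
    rw [seg, ← h2, h1]
  have : prefP w c = prefP w a + wordVal (seg w a c) := by
    rw [prefP, h3, wordVal, List.map_append, List.sum_append]; rfl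
  linarith

/-- If two '+−' Motzkin paths intersect, then one is properly contained in the
interior of the other; in particular neither endpoint of the larger is contained
in the smaller. -/
theorem motzkin_intersect (w : List Letter) (a b a' b' : ℕ)
    (h : IsMotzkinAt w a b) (h' : IsMotzkinAt w a' b')
    (hne : (a, b) ≠ (a', b'))
    (hmeet : ∃ c, a ≤ c ∧ c < b ∧ a' ≤ c ∧ c < b') :
    (a < a' ∧ b' < b) ∨ (a' < a ∧ b < b') := by
  obtain ⟨hab, hbl, _, _, hzero, hpos⟩ := h
  obtain ⟨hab', hbl', _, _, hzero', hpos'⟩ := h'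
  obtain ⟨c, hc1, hc2, hc3, hc4⟩ := hmeet
  rw [segP w hab.le] at hzero
  rw [segP w hab'.le] at hzero'
  have hp : ∀ d, a < d → d < b → prefP w a < prefP w d := by
    intro d h1 h2
    have := hpos d h1 h2
    rw [segP w h1.le] at this; linarith
  have hp' : ∀ d, a' < d → d < b' → prefP w a' < prefP w d := by
    intro d h1 h2
    have := hpos' d h1 h2
    rw [segP w h1.le] at this; linarith
  rcases lt_trichotomy a a' with haa | haa | haa
  · have ha'b : a' < b := lt_of_le_of_lt hc3 hc2
    have h1 : prefP w a < prefP w a' := hp a' haa ha'b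
    rcases lt_trichotomy b b' with hbb | hbb | hbb
    · have := hp' b ha'b hbb
      linarith
    · exfalso; rw [hbb] at hzero; linarith
    · exact Or.inl ⟨haa, hbb⟩
  · subst haa
    rcases lt_trichotomy b b' with hbb | hbb | hbb
    · have := hp' b hab hbb
      linarith
    · exact absurd (by rw [hbb]) hne
    · have hab'' : a < b' := lt_of_le_of_lt hc1 hc4
      have := hp b' hab'' hbb
      linarith
  · have hab'' : a < b' := lt_of_le_of_lt hc1 hc4
    have h1 : prefP w a' < prefP w a := hp' a haa hab''
    rcases lt_trichotomy b b' with hbb | hbb | hbb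
    · exact Or.inr ⟨haa, hbb⟩
    · exfalso; rw [hbb] at hzero; linarith
    · have := hp b' hab'' hbb
      linarith
end

section
/- Let w be a word over {+, −, ±} and let u be the union of all '+−' Motzkin paths in w. Then in the complementary subword w − u, every occurrence of + comes after every occurrence of −. -/
/-- Position `i` of `w` belongs to the union `u` of all '+−' Motzkin paths of `w`. -/
def InMotzkinUnion (w : List Letter) (i : ℕ) : Prop :=
  ∃ a b, IsMotzkinAt w a b ∧ a ≤ i ∧ i < b

def prefVal (w : List Letter) (c : ℕ) : ℤ := wordVal (w.take c)

lemma Letter.val_le_one (l : Letter) : l.val ≤ 1 := by cases l <;> simp [Letter.val]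
lemma Letter.neg_one_le_val (l : Letter) : -1 ≤ l.val := by cases l <;> simp [Letter.val]

lemma Letter.eq_plus_of_val (l : Letter) (h : 1 ≤ l.val) : l = Letter.plus := by
  cases l <;> simp_all [Letter.val]

lemma Letter.eq_minus_of_val (l : Letter) (h : l.val ≤ -1) : l = Letter.minus := by
  cases l <;> simp_all [Letter.val]

lemma wordVal_append (x y : List Letter) : wordVal (x ++ y) = wordVal x + wordVal y := by
  simp [wordVal]

lemma prefVal_succ (w : List Letter) (c : ℕ) (hc : c < w.length) :
    prefVal w (c + 1) = prefVal w c + (w[c]).val := by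
  have : w.take (c + 1) = w.take c ++ [w[c]] := by
    rw [List.take_succ, List.getElem?_eq_getElem hc]; rfl
  rw [prefVal, this, wordVal_append]
  simp [wordVal, prefVal]

lemma take_add_seg (w : List Letter) (a b : ℕ) (h : a ≤ b) :
    w.take a ++ seg w a b = w.take b := by
  have : (w.take b).take a = w.take a := by rw [List.take_take, min_eq_left h]
  conv_rhs => rw [← List.take_append_drop a (w.take b)]
  rw [this, seg]

lemma wordVal_seg (w : List Letter) (a b : ℕ) (h : a ≤ b) :
    wordVal (seg w a b) = prefVal w b - prefVal w a := by
  have := take_add_seg w a b h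
  have h2 : prefVal w b = prefVal w a + wordVal (seg w a b) := by
    rw [prefVal, ← this, wordVal_append]; rfl
  omega

lemma seg_head? (w : List Letter) (a b : ℕ) (h1 : a < b) (h2 : b ≤ w.length)
    (ha : a < w.length) : (seg w a b).head? = some w[a] := by
  rw [seg, List.head?_drop, List.getElem?_take, if_pos h1, List.getElem?_eq_getElem ha]

lemma seg_getLast? (w : List Letter) (a b : ℕ) (h1 : a < b) (h2 : b ≤ w.length) :
    (seg w a b).getLast? = some (w[b-1]'(by omega)) := by
  have hlen : (seg w a b).length = b - a := by
    rw [seg, List.length_drop, List.length_take]; omega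
  rw [List.getLast?_eq_getElem?, hlen, seg, List.getElem?_drop]
  have : a + (b - a - 1) = b - 1 := by omega
  rw [this, List.getElem?_take, if_pos (by omega : b - 1 < b), List.getElem?_eq_getElem (by omega)]

/-- Discrete intermediate value theorem: prefix sums step up by at most 1. -/
lemma ivt (w : List Letter) (m : ℤ) : ∀ b a, a ≤ b → b ≤ w.length →
    prefVal w a ≤ m → m ≤ prefVal w b → ∃ c, a ≤ c ∧ c ≤ b ∧ prefVal w c = m := by
  intro b
  induction b with
  | zero =>
    intro a h1 _ h3 h4
    have ha : a = 0 := by omega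
    subst ha
    exact ⟨0, le_refl _, le_refl _, le_antisymm h3 h4⟩
  | succ b ih =>
    intro a h1 h2 h3 h4
    rcases Nat.lt_or_ge a (b+1) with h | h
    · have hab : a ≤ b := by omega
      rcases le_or_gt m (prefVal w b) with hm | hm
      · obtain ⟨c, hc1, hc2, hc3⟩ := ih a hab (by omega) h3 hm
        exact ⟨c, hc1, by omega, hc3⟩
      · have hb : b < w.length := by omega
        have hstep := prefVal_succ w b hb
        have := Letter.val_le_one (w[b])
        exact ⟨b+1, by omega, le_refl _, by omega⟩
    · have : a = b + 1 := by omega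
      subst this
      exact ⟨b + 1, le_refl _, le_refl _, le_antisymm h3 h4⟩

/-- In the complementary subword `w − u` obtained by deleting all positions lying in
some '+−' Motzkin path, every occurrence of `+` comes after every occurrence of `−`:
there is no position with `+` strictly before a position with `−`, both outside `u`. -/
theorem plus_after_minus_outside_union (w : List Letter)
    (i j : ℕ) (hi : i < w.length) (hj : j < w.length) (hij : i < j)
    (hiu : ¬ InMotzkinUnion w i) (hju : ¬ InMotzkinUnion w j) :
    ¬ (w[i] = Letter.plus ∧ w[j] = Letter.minus) := by
  classical
  rintro ⟨hwi, hwj⟩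
  by_cases hcase : ∃ c, i < c ∧ c ≤ j + 1 ∧ prefVal w c ≤ prefVal w i
  · -- Case 1: the prefix sum returns to its starting level by j+1;
    -- take the first such time b and get a Motzkin path [i, b) containing i.
    have hstepi : prefVal w (i + 1) = prefVal w i + 1 := by
      rw [prefVal_succ w i hi, hwi]; rfl
    obtain ⟨hb1, hb2, hb3⟩ := Nat.find_spec hcase
    have hmin : ∀ c, i < c → c < Nat.find hcase → prefVal w i < prefVal w c := by
      intro c hc1 hc2
      have := Nat.find_min hcase hc2
      push_neg at this
      exact this hc1 (by omega)
    generalize hg : Nat.find hcase = b at hb1 hb2 hb3 hmin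
    have hbge : i + 2 ≤ b := by
      rcases Nat.lt_or_ge b (i + 2) with h | h
      · exfalso
        have hbe : b = i + 1 := by omega
        rw [hbe] at hb3; omega
      · exact h
    have hb1' : prefVal w i < prefVal w (b - 1) := hmin (b - 1) (by omega) (by omega)
    have hblen : b - 1 < w.length := by omega
    have hstepb : prefVal w b = prefVal w (b - 1) + (w[b-1]'hblen).val := by
      have := prefVal_succ w (b - 1) hblen
      have h' : b - 1 + 1 = b := by omega
      rwa [h'] at this
    have hvneg : (w[b-1]'hblen).val ≤ -1 := by
      by_contra h
      have := Letter.neg_one_le_val (w[b-1]'hblen)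
      omega
    have hlast : (w[b-1]'hblen) = Letter.minus := Letter.eq_minus_of_val _ hvneg
    have hsum : prefVal w b = prefVal w i := by
      have := Letter.neg_one_le_val (w[b-1]'hblen)
      omega
    exact hiu ⟨i, b, ⟨by omega, by omega,
      by rw [seg_head? w i b (by omega) (by omega) hi, hwi],
      by rw [seg_getLast? w i b (by omega) (by omega), hlast],
      by rw [wordVal_seg w i b (by omega)]; omega,
      fun c hc1 hc2 => by
        rw [wordVal_seg w i c (by omega)]
        have := hmin c hc1 hc2
        omega⟩, le_refl i, by omega⟩
  · -- Case 2: prefix sums stay strictly above the start; find a Motzkin path ending at j.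
    push_neg at hcase
    have hstepj : prefVal w (j + 1) = prefVal w j + (-1) := by
      rw [prefVal_succ w j hj, hwj]; rfl
    have hm : prefVal w i < prefVal w (j + 1) := hcase (j + 1) (by omega) (le_refl _)
    obtain ⟨c, hc1, hc2, hc3⟩ :=
      ivt w (prefVal w (j + 1)) j i (by omega) (by omega) (by omega) (by omega)
    set Q : ℕ → Prop := fun a => i ≤ a ∧ prefVal w a = prefVal w (j + 1) with hQdef
    have hca : c ≤ Nat.findGreatest Q j := Nat.le_findGreatest hc2 ⟨hc1, hc3⟩
    have haj : Nat.findGreatest Q j ≤ j := Nat.findGreatest_le j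
    obtain ⟨hia, hpa⟩ : Q (Nat.findGreatest Q j) := Nat.findGreatest_spec hc2 ⟨hc1, hc3⟩
    have hkey : ∀ c', Nat.findGreatest Q j < c' → c' ≤ j →
        prefVal w (j + 1) < prefVal w c' := by
      intro c' hc'1 hc'2
      by_contra h
      push_neg at h
      have hne : prefVal w c' ≠ prefVal w (j + 1) := by
        intro he
        exact Nat.findGreatest_is_greatest (P := Q) hc'1 hc'2 ⟨by omega, he⟩
      obtain ⟨d, hd1, hd2, hd3⟩ :=
        ivt w (prefVal w (j + 1)) j c' hc'2 (by omega) h (by omega)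
      have hdne : d ≠ c' := by intro he; rw [he] at hd3; exact hne hd3
      exact Nat.findGreatest_is_greatest (P := Q) (by omega) hd2 ⟨by omega, hd3⟩
    generalize hg : Nat.findGreatest Q j = a at hca haj hia hpa hkey
    have haltj : a < j := by
      rcases Nat.lt_or_ge a j with h | h
      · exact h
      · exfalso
        have : a = j := by omega
        rw [this] at hpa; omega
    have halen : a < w.length := by omega
    have hstepa : prefVal w (a + 1) = prefVal w a + (w[a]'halen).val :=
      prefVal_succ w a halen
    have hv1 : 1 ≤ (w[a]'halen).val := by
      have := hkey (a + 1) (by omega) (by omega)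
      have := Letter.val_le_one (w[a]'halen)
      omega
    have hhead : (w[a]'halen) = Letter.plus := Letter.eq_plus_of_val _ hv1
    exact hju ⟨a, j + 1, ⟨by omega, by omega,
      by rw [seg_head? w a (j + 1) (by omega) (by omega) halen, hhead],
      by
        rw [seg_getLast? w a (j + 1) (by omega) (by omega)]
        simp only [Nat.add_sub_cancel]
        rw [hwj],
      by rw [wordVal_seg w a (j + 1) (by omega)]; omega,
      fun c' hc'1 hc'2 => by
        rw [wordVal_seg w a c' (by omega)]
        have := hkey c' hc'1 (by omega)
        omega⟩, by omega, by omega⟩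
end

section
/- The rewriting system on words over {+, −, ±} with rules: delete '+−', delete '+±−', replace '+±' by '+', replace '±−' by '−', is terminating and confluent; every word reduces to a unique normal form consisting of a (possibly empty) block of '−', followed by a (possibly empty) block of '±', followed by a (possibly empty) block of '+'. -/
/-- One application of a signature reduction rule to a contiguous subword:
'+−' ↦ ε, '+±−' ↦ ε, '+±' ↦ '+', '±−' ↦ '−'. -/
inductive Step : List Letter → List Letter → Prop
  | plus_minus (x y : List Letter) :
      Step (x ++ [Letter.plus, Letter.minus] ++ y) (x ++ y)
  | plus_pm_minus (x y : List Letter) :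
      Step (x ++ [Letter.plus, Letter.pm, Letter.minus] ++ y) (x ++ y)
  | plus_pm (x y : List Letter) :
      Step (x ++ [Letter.plus, Letter.pm] ++ y) (x ++ [Letter.plus] ++ y)
  | pm_minus (x y : List Letter) :
      Step (x ++ [Letter.pm, Letter.minus] ++ y) (x ++ [Letter.minus] ++ y)

namespace SigAux

abbrev St := ℕ × ℕ × ℕ

/-- Transition function: append one letter to a normal form `−^a ±^b +^c`. -/
def f : St → Letter → St
  | (a, b, c), .plus => (a, b, c + 1)
  | (a, b, c), .pm => if c = 0 then (a, b + 1, 0) else (a, b, c)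
  | (a, b, c), .minus => if c = 0 then (a + 1, 0, 0) else (a, b, c - 1)

def toWord : St → List Letter
  | (a, b, c) => List.replicate a Letter.minus ++ List.replicate b Letter.pm ++
      List.replicate c Letter.plus

def nrm (w : List Letter) : St := w.foldl f (0, 0, 0)

def rank : Letter → ℕ
  | .minus => 0
  | .pm => 1
  | .plus => 2

lemma step_length {x y : List Letter} (h : Step x y) : y.length < x.length := by
  cases h <;> simp <;> omega

lemma norm_step {x y : List Letter} (h : Step x y) : nrm x = nrm y := by
  have key : ∀ (L L' : List Letter), (∀ s : St, L.foldl f s = L'.foldl f s) →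
      ∀ (u v : List Letter), nrm (u ++ L ++ v) = nrm (u ++ L' ++ v) := by
    intro L L' hLL u v
    simp only [nrm, List.foldl_append, hLL]
  cases h with
  | plus_minus x y =>
      simpa using key [Letter.plus, Letter.minus] [] (by rintro ⟨a, b, c⟩; simp [f]) x y
  | plus_pm_minus x y =>
      simpa using key [Letter.plus, Letter.pm, Letter.minus] []
        (by rintro ⟨a, b, c⟩; simp [f]) x y
  | plus_pm x y =>
      exact key [Letter.plus, Letter.pm] [Letter.plus] (by rintro ⟨a, b, c⟩; simp [f]) x y
  | pm_minus x y =>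
      refine key [Letter.pm, Letter.minus] [Letter.minus] ?_ x y
      rintro ⟨a, b, c⟩
      rcases c with _ | c <;> simp [f]

lemma norm_rtg {x y : List Letter} (h : Relation.ReflTransGen Step x y) :
    nrm x = nrm y := by
  induction h with
  | refl => rfl
  | tail _ h2 ih => rw [ih, norm_step h2]

/-- `toWord s` is weakly sorted by rank. -/
lemma sorted_toWord (s : St) : (toWord s).Pairwise (fun l l' => rank l ≤ rank l') := by
  rcases s with ⟨a, b, c⟩
  simp only [toWord, List.pairwise_append, List.pairwise_replicate, List.mem_replicate,
    List.mem_append]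
  refine ⟨⟨Or.inr le_rfl, Or.inr le_rfl, ?_⟩, Or.inr le_rfl, ?_⟩
  · rintro x ⟨-, rfl⟩ y ⟨-, rfl⟩
    simp [rank]
  · rintro x (⟨-, rfl⟩ | ⟨-, rfl⟩) y ⟨-, rfl⟩ <;> simp [rank]

lemma mid_sublist (x y m : List Letter) : List.Sublist m (x ++ m ++ y) := by
  rw [List.append_assoc]
  exact (List.sublist_append_left m y).trans (List.sublist_append_right x _)

lemma no_step_of_sorted {v : List Letter}
    (h : v.Pairwise (fun l l' => rank l ≤ rank l')) : ¬ ∃ u, Step v u := by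
  rintro ⟨u, hu⟩
  cases hu with
  | plus_minus x y =>
      have := h.sublist (mid_sublist x y [Letter.plus, Letter.minus])
      simp [rank] at this
  | plus_pm_minus x y =>
      have := h.sublist (mid_sublist x y [Letter.plus, Letter.pm, Letter.minus])
      simp [rank] at this
  | plus_pm x y =>
      have := h.sublist (mid_sublist x y [Letter.plus, Letter.pm])
      simp [rank] at this
  | pm_minus x y =>
      have := h.sublist (mid_sublist x y [Letter.pm, Letter.minus])
      simp [rank] at this

lemma pm_block_minus (x y : List Letter) (b : ℕ) :
    Relation.ReflTransGen Step (x ++ List.replicate b Letter.pm ++ [Letter.minus] ++ y)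
      (x ++ [Letter.minus] ++ y) := by
  induction b with
  | zero => simp; exact Relation.ReflTransGen.refl
  | succ b ih =>
      refine Relation.ReflTransGen.head ?_ ih
      have h := Step.pm_minus (x ++ List.replicate b Letter.pm) y
      have e1 : x ++ List.replicate (b + 1) Letter.pm ++ [Letter.minus] ++ y =
          (x ++ List.replicate b Letter.pm) ++ [Letter.pm, Letter.minus] ++ y := by
        simp [List.replicate_succ']
      have e2 : x ++ List.replicate b Letter.pm ++ [Letter.minus] ++ y =
          (x ++ List.replicate b Letter.pm) ++ [Letter.minus] ++ y := by
        simp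
      rw [e1, e2]
      exact h

lemma append_letter_step (s : St) (l : Letter) (w : List Letter) :
    Relation.ReflTransGen Step (toWord s ++ l :: w) (toWord (f s l) ++ w) := by
  rcases s with ⟨a, b, c⟩
  cases l with
  | plus =>
      have : toWord (a, b, c) ++ Letter.plus :: w = toWord (a, b, c + 1) ++ w := by
        simp [toWord, List.replicate_succ']
      rw [this, show f (a, b, c) Letter.plus = (a, b, c + 1) from rfl]
  | pm =>
      rcases c with _ | c
      · have : toWord (a, b, 0) ++ Letter.pm :: w = toWord (a, b + 1, 0) ++ w := by
          simp [toWord, List.replicate_succ']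
        rw [this, show f (a, b, 0) Letter.pm = (a, b + 1, 0) by simp [f]]
      · have h := Step.plus_pm (List.replicate a Letter.minus ++ List.replicate b Letter.pm ++
          List.replicate c Letter.plus) w
        have e1 : toWord (a, b, c + 1) ++ Letter.pm :: w =
            (List.replicate a Letter.minus ++ List.replicate b Letter.pm ++
              List.replicate c Letter.plus) ++ [Letter.plus, Letter.pm] ++ w := by
          simp [toWord, List.replicate_succ']
        have e2 : toWord (f (a, b, c + 1) Letter.pm) ++ w =
            (List.replicate a Letter.minus ++ List.replicate b Letter.pm ++
              List.replicate c Letter.plus) ++ [Letter.plus] ++ w := by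
          simp [toWord, f, List.replicate_succ']
        rw [e1, e2]
        exact Relation.ReflTransGen.single h
  | minus =>
      rcases c with _ | c
      · have e1 : toWord (a, b, 0) ++ Letter.minus :: w =
            List.replicate a Letter.minus ++ List.replicate b Letter.pm ++ [Letter.minus] ++ w := by
          simp [toWord]
        have e2 : toWord (f (a, b, 0) Letter.minus) ++ w =
            List.replicate a Letter.minus ++ [Letter.minus] ++ w := by
          simp [toWord, f, List.replicate_succ']
        rw [e1, e2]
        exact pm_block_minus _ _ _
      · have h := Step.plus_minus (List.replicate a Letter.minus ++ List.replicate b Letter.pm ++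
          List.replicate c Letter.plus) w
        have e1 : toWord (a, b, c + 1) ++ Letter.minus :: w =
            (List.replicate a Letter.minus ++ List.replicate b Letter.pm ++
              List.replicate c Letter.plus) ++ [Letter.plus, Letter.minus] ++ w := by
          simp [toWord, List.replicate_succ']
        have e2 : toWord (f (a, b, c + 1) Letter.minus) ++ w =
            (List.replicate a Letter.minus ++ List.replicate b Letter.pm ++
              List.replicate c Letter.plus) ++ w := by
          simp [toWord, f]
        rw [e1, e2]
        exact Relation.ReflTransGen.single h

lemma reduce_aux : ∀ (w : List Letter) (s : St),
    Relation.ReflTransGen Step (toWord s ++ w) (toWord (w.foldl f s)) := by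
  intro w
  induction w with
  | nil => intro s; simp; exact Relation.ReflTransGen.refl
  | cons l w ih =>
      intro s
      exact (append_letter_step s l w).trans (by simpa using ih (f s l))

lemma reduce_to_norm (w : List Letter) :
    Relation.ReflTransGen Step w (toWord (nrm w)) := by
  have := reduce_aux w (0, 0, 0)
  simpa [toWord, nrm] using this

lemma nf_rigid {v u : List Letter} (h : Relation.ReflTransGen Step v u)
    (hn : ¬ ∃ w, Step v w) : v = u := by
  rcases Relation.ReflTransGen.cases_head h with rfl | ⟨c, hc, -⟩
  · rfl
  · exact absurd ⟨c, hc⟩ hn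

end SigAux

open SigAux in
/-- The signature rewriting system is terminating and confluent, and every word
reduces to a unique normal form of the shape `−^a ±^b +^c`. -/
theorem signature_rewriting_terminating_confluent_normal_form :
    WellFounded (fun a b : List Letter => Step b a) ∧
    (∀ a b c : List Letter, Relation.ReflTransGen Step a b →
      Relation.ReflTransGen Step a c →
        ∃ d, Relation.ReflTransGen Step b d ∧ Relation.ReflTransGen Step c d) ∧
    (∀ w : List Letter, ∃! v : List Letter,
      Relation.ReflTransGen Step w v ∧ (¬ ∃ u, Step v u) ∧
        ∃ a b c : ℕ, v = List.replicate a Letter.minus ++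
          List.replicate b Letter.pm ++ List.replicate c Letter.plus) := by
  refine ⟨?_, ?_, ?_⟩
  · exact Subrelation.wf (fun h => step_length h)
      (InvImage.wf List.length (Nat.lt_wfRel.wf))
  · intro a b c hab hac
    refine ⟨toWord (nrm a), ?_, ?_⟩
    · rw [norm_rtg hab]; exact reduce_to_norm b
    · rw [norm_rtg hac]; exact reduce_to_norm c
  · intro w
    refine ⟨toWord (nrm w), ⟨reduce_to_norm w, no_step_of_sorted (sorted_toWord _), ?_⟩, ?_⟩
    · obtain ⟨a, b, c⟩ := nrm w
      exact ⟨a, b, c, rfl⟩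
    · rintro v ⟨hwv, hnf, -⟩
      have h1 : nrm v = nrm w := (norm_rtg hwv).symm
      have h2 := reduce_to_norm v
      rw [h1] at h2
      exact nf_rigid h2 hnf
end

section
/- A word over {+, −, ±} is a normal form for the signature rewriting system (i.e., no rule applies) if and only if it has the form −^a ±^b +^c for nonnegative integers a, b, c. -/
/-!
Order the letters `− < ± < +`. Every rule rewrites a word containing an adjacent descent
(the left-hand side of `+±−` contains the descent `+±`), and each of the three descents
`+−`, `+±`, `±−` is the left-hand side of a rule. So the normal forms are exactly the words
without adjacent descents, i.e. the sorted words `−^a ±^b +^c`.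
-/

namespace Letter

def rank : Letter → ℕ
  | minus => 0
  | pm => 1
  | plus => 2

end Letter

open Letter List

def sortedWord (a b c : ℕ) : List Letter :=
  replicate a minus ++ replicate b pm ++ replicate c plus

theorem exists_step_iff_exists_descent (w : List Letter) :
    (∃ u, Step w u) ↔ ∃ x p q y, w = x ++ p :: q :: y ∧ q.rank < p.rank := by
  constructor
  · rintro ⟨u, hs⟩
    cases hs with
    | plus_minus x y => exact ⟨x, plus, minus, y, by simp, by decide⟩
    | plus_pm_minus x y => exact ⟨x, plus, pm, minus :: y, by simp, by decide⟩
    | plus_pm x y => exact ⟨x, plus, pm, y, by simp, by decide⟩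
    | pm_minus x y => exact ⟨x, pm, minus, y, by simp, by decide⟩
  · rintro ⟨x, p, q, y, rfl, hlt⟩
    cases p <;> cases q <;> try exact absurd hlt (by decide)
    · exact ⟨x ++ y, by simpa using Step.plus_minus x y⟩
    · exact ⟨x ++ [plus] ++ y, by simpa using Step.plus_pm x y⟩
    · exact ⟨x ++ [minus] ++ y, by simpa using Step.pm_minus x y⟩

theorem not_exists_step_iff_isChain (w : List Letter) :
    (¬ ∃ u, Step w u) ↔ w.IsChain (fun p q => p.rank ≤ q.rank) := by
  rw [exists_step_iff_exists_descent, isChain_iff_forall_rel_of_append_cons_cons]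
  push Not
  exact ⟨fun h p q x y hw => h x p q y hw, fun h x p q y hw => h hw⟩

theorem isChain_rank_sortedWord (a b c : ℕ) :
    (sortedWord a b c).IsChain (fun p q => p.rank ≤ q.rank) :=
  Pairwise.isChain <| by simp [sortedWord, pairwise_append, pairwise_replicate, rank]

theorem exists_sortedWord_of_isChain_rank {w : List Letter}
    (hw : w.IsChain (fun p q => p.rank ≤ q.rank)) : ∃ a b c, w = sortedWord a b c := by
  induction w with
  | nil => exact ⟨0, 0, 0, rfl⟩
  | cons p t ih =>
    obtain ⟨hhead, htail⟩ := isChain_cons.mp hw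
    obtain ⟨a, b, c, rfl⟩ := ih htail
    cases p with
    | minus => exact ⟨a + 1, b, c, rfl⟩
    | pm =>
      obtain rfl : a = 0 := by
        rcases a with _ | a
        · rfl
        · exact absurd (hhead minus rfl) (by decide)
      exact ⟨0, b + 1, c, rfl⟩
    | plus =>
      obtain ⟨rfl, rfl⟩ : a = 0 ∧ b = 0 := by
        rcases a with _ | a
        · rcases b with _ | b
          · exact ⟨rfl, rfl⟩
          · exact absurd (hhead pm rfl) (by decide)
        · exact absurd (hhead minus rfl) (by decide)
      exact ⟨0, 0, c + 1, rfl⟩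

/-- A word over `{+, −, ±}` is a normal form for the signature rewriting system
(no rule applies) if and only if it has the form `−^a ±^b +^c`. -/
theorem signature_normal_form_iff (w : List Letter) :
    (¬ ∃ u, Step w u) ↔
      ∃ a b c : ℕ, w = List.replicate a Letter.minus ++
        List.replicate b Letter.pm ++ List.replicate c Letter.plus := by
  rw [not_exists_step_iff_isChain]
  exact ⟨exists_sortedWord_of_isChain_rank,
    fun ⟨a, b, c, hw⟩ => hw ▸ isChain_rank_sortedWord a b c⟩
end
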